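/- arXiv:1403.4324 — 3 statements merged into one kernel-verified Lean document; each statement's English description precedes it below -/
import Mathlib

section
/- Let Λ be a row-finite locally convex k-graph. A function g : Λ^0 → [0,∞) is a graph trace on Λ if and only if for every v ∈ Λ^0 and every i ∈ {1,…,k} with vΛ^{e_i} ≠ ∅, one has g(v) = Σ_{λ ∈ vΛ^{e_i}} g(s(λ)). -/
open scoped BigOperators NNReal ENNReal

/-- A `k`-graph: a countable small category presented on its set of morphisms,
with a range map, a source map, a (total, junk-valued on non-composable pairs)
composition, and a degree functor into `ℕ^k` satisfying the factorisation
property. -/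
structure KGraph (k : ℕ) where
  M : Type
  countableM : Countable M
  nonemptyM : Nonempty M
  src : M → M
  rng : M → M
  comp : M → M → M
  deg : M → Fin k → ℕ
  src_src : ∀ x, src (src x) = src x
  rng_src : ∀ x, rng (src x) = src x
  src_rng : ∀ x, src (rng x) = rng x
  rng_rng : ∀ x, rng (rng x) = rng x
  comp_id : ∀ x, comp x (src x) = x
  id_comp : ∀ x, comp (rng x) x = x
  src_comp : ∀ x y, src x = rng y → src (comp x y) = src y
  rng_comp : ∀ x y, src x = rng y → rng (comp x y) = rng x
  comp_assoc : ∀ x y z, src x = rng y → src y = rng z →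
    comp (comp x y) z = comp x (comp y z)
  deg_src : ∀ x, deg (src x) = 0
  deg_rng : ∀ x, deg (rng x) = 0
  deg_comp : ∀ x y, src x = rng y → deg (comp x y) = deg x + deg y
  factor : ∀ (x : M) (m n : Fin k → ℕ), deg x = m + n →
    ∃! p : M × M, src p.1 = rng p.2 ∧ comp p.1 p.2 = x ∧ deg p.1 = m ∧ deg p.2 = n

namespace KGraph

variable {k : ℕ} (Λ : KGraph k)

/-- The vertices (identity morphisms) of a `k`-graph. -/
def IsVertex (v : Λ.M) : Prop := Λ.rng v = v

/-- `Composable x y` means the composition `x ∘ y` (i.e. the path `xy`) is defined. -/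
def Composable (x y : Λ.M) : Prop := Λ.src x = Λ.rng y

/-- The type of vertices of `Λ`. -/
def Vtx := {v : Λ.M // Λ.IsVertex v}

theorem isVertex_src (x : Λ.M) : Λ.IsVertex (Λ.src x) := Λ.rng_src x

theorem isVertex_rng (x : Λ.M) : Λ.IsVertex (Λ.rng x) := Λ.rng_rng x

/-- The source of a morphism, as a vertex. -/
def srcV (x : Λ.M) : Λ.Vtx := ⟨Λ.src x, Λ.isVertex_src x⟩

/-- The set `vΛ^{≤ n}`. -/
def leSet (v : Λ.M) (n : Fin k → ℕ) : Set Λ.M :=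
  {x | Λ.rng x = v ∧ Λ.deg x ≤ n ∧
    ∀ i : Fin k, Λ.deg x + Pi.single i 1 ≤ n →
      ¬∃ y, Λ.rng y = Λ.src x ∧ Λ.deg y = Pi.single i 1}

/-- A `k`-graph is row-finite if `vΛ^n` is finite for every vertex `v` and `n ∈ ℕ^k`. -/
def RowFinite : Prop :=
  ∀ (v : Λ.M) (n : Fin k → ℕ), Λ.IsVertex v → {x | Λ.rng x = v ∧ Λ.deg x = n}.Finite

/-- A `k`-graph is locally convex if whenever `i < j`, `e ∈ Λ^{e_i}`, `f ∈ Λ^{e_j}` and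
`r e = r f`, both `e` and `f` extend to paths of degree `e_i + e_j`. -/
def LocallyConvex : Prop :=
  ∀ (i j : Fin k), i < j → ∀ e f : Λ.M,
    Λ.deg e = Pi.single i 1 → Λ.deg f = Pi.single j 1 → Λ.rng e = Λ.rng f →
    (∃ e', Λ.Composable e e' ∧ Λ.deg e' = Pi.single j 1) ∧
    (∃ f', Λ.Composable f f' ∧ Λ.deg f' = Pi.single i 1)

/-- `Λ^{min}(x,y)`: the pairs `(α, β)` with `xα = yβ` of degree `d x ⊔ d y`. -/
def MinExt (x y : Λ.M) : Set (Λ.M × Λ.M) :=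
  {p | Λ.Composable x p.1 ∧ Λ.Composable y p.2 ∧
    Λ.comp x p.1 = Λ.comp y p.2 ∧ Λ.deg (Λ.comp x p.1) = Λ.deg x ⊔ Λ.deg y}

/-- A subset `E ⊆ vΛ` is exhaustive if every `x ∈ vΛ` has a minimal common extension
with some element of `E`. -/
def Exhaustive (v : Λ.M) (E : Set Λ.M) : Prop :=
  ∀ x, Λ.rng x = v → ∃ μ ∈ E, (Λ.MinExt x μ).Nonempty

/-- A graph trace on `Λ`. -/
def IsGraphTrace (g : Λ.Vtx → ℝ≥0) : Prop :=
  ∀ (v : Λ.Vtx) (n : Fin k → ℕ), g v = ∑ᶠ x ∈ Λ.leSet v.1 n, g (Λ.srcV x)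

/-- A `𝕋`-valued `2`-cocycle on `Λ`, presented as a `ℂ`-valued function that is
unimodular on composable pairs. -/
def IsTCocycle (c : Λ.M → Λ.M → ℂ) : Prop :=
  (∀ x y, Λ.Composable x y → ‖c x y‖ = 1) ∧
  (∀ x y, Λ.IsVertex x ∨ Λ.IsVertex y → c x y = 1) ∧
  (∀ x y z, Λ.Composable x y → Λ.Composable y z →
    c x y * c (Λ.comp x y) z = c y z * c x (Λ.comp y z))

/-- A Cuntz–Krieger `(Λ, c)`-family in a `C*`-algebra `B`: relations (CK1)–(CK4). -/
def IsCKFamily {B : Type*} [NonUnitalCStarAlgebra B] [NormedSpace ℂ B]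
    (c : Λ.M → Λ.M → ℂ) (s : Λ.M → B) : Prop :=
  (∀ v, Λ.IsVertex v → star (s v) = s v ∧ s v * s v = s v) ∧
  (∀ v w, Λ.IsVertex v → Λ.IsVertex w → v ≠ w → s v * s w = 0) ∧
  (∀ x y, Λ.Composable x y → s x * s y = c x y • s (Λ.comp x y)) ∧
  (∀ x, star (s x) * s x = s (Λ.src x)) ∧
  (∀ (v : Λ.M) (n : Fin k → ℕ), Λ.IsVertex v →
    s v = ∑ᶠ x ∈ Λ.leSet v n, s x * star (s x))

end KGraph

/-!
For `v` with `vΛ^{e_i} ≠ ∅` one has `vΛ^{≤ e_i} = vΛ^{e_i}`, and otherwise `vΛ^{≤ e_i} = {v}`;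
so the edge condition is exactly the trace identity for `n = e_i`. Conversely, local convexity
gives the disjoint decomposition `vΛ^{≤ e_i + m} = ⨆_{μ ∈ vΛ^{≤ e_i}} μ · s(μ)Λ^{≤ m}`, and summing
`g ∘ s` over it derives the identity for `e_i + m` from those for `e_i` and `m`; induction on `n`
finishes. The decomposition rests on one consequence of local convexity: if `r(λ)` receives an
edge of degree `e_i` and `d(λ)_i = 0`, then so does `s(λ)`.
-/

namespace Pi

variable {ι : Type*} [DecidableEq ι]

theorem eq_zero_or_eq_single_of_le_single_one {p : ι → ℕ} {i : ι} (h : p ≤ Pi.single i 1) :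
    p = 0 ∨ p = Pi.single i 1 := by
  have hp : p = Pi.single i (p i) := by
    funext j
    by_cases hj : j = i
    · subst hj; simp
    · simpa [hj] using h j
  rcases Nat.le_one_iff_eq_zero_or_eq_one.mp (by simpa using h i) with hi | hi <;>
    rw [hp, hi] <;> simp

theorem not_add_single_one_le (p : ι → ℕ) (i : ι) : ¬p + Pi.single i 1 ≤ p :=
  (lt_add_of_pos_right p (Pi.single_pos.2 one_pos)).not_ge

theorem le_of_le_single_add {M : Type*} [AddZeroClass M] [LE M] {p m : ι → M} {i : ι} {a : M}
    (h : p ≤ Pi.single i a + m) (hi : p i ≤ m i) : p ≤ m := by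
  intro j
  by_cases hj : j = i
  · subst hj; exact hi
  · simpa [hj] using h j

theorem single_one_add_tsub {n : ι → ℕ} {i : ι} (hi : n i ≠ 0) :
    Pi.single i 1 + (n - Pi.single i 1) = n :=
  add_tsub_cancel_of_le fun j => by
    by_cases hj : j = i
    · subst hj; simpa [Nat.one_le_iff_ne_zero] using hi
    · simp [hj]

theorem tsub_single_one_lt {n : ι → ℕ} {i : ι} (hi : n i ≠ 0) : n - Pi.single i 1 < n := by
  conv_rhs => rw [← single_one_add_tsub hi]
  exact lt_add_of_pos_left _ (Pi.single_pos.2 one_pos)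

end Pi

namespace KGraph

variable {k : ℕ} {Λ : KGraph k}

def edgeSet (Λ : KGraph k) (v : Λ.M) (i : Fin k) : Set Λ.M :=
  {x | Λ.rng x = v ∧ Λ.deg x = Pi.single i 1}

theorem eq_rng_of_deg_eq_zero {x : Λ.M} (hx : Λ.deg x = 0) : x = Λ.rng x := by
  obtain ⟨p, -, hu⟩ := Λ.factor x 0 0 (by simpa using hx)
  have h1 := hu (Λ.rng x, x) ⟨Λ.src_rng x, Λ.id_comp x, Λ.deg_rng x, hx⟩
  have h2 := hu (x, Λ.src x) ⟨(Λ.rng_src x).symm, Λ.comp_id x, hx, Λ.deg_src x⟩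
  exact congrArg Prod.fst (h2.trans h1.symm)

theorem src_eq_rng_of_deg_eq_zero {x : Λ.M} (hx : Λ.deg x = 0) : Λ.src x = Λ.rng x := by
  rw [eq_rng_of_deg_eq_zero hx, Λ.src_rng, Λ.rng_rng]

theorem src_eq_of_isVertex {v : Λ.M} (hv : Λ.IsVertex v) : Λ.src v = v := by
  rw [← hv, Λ.src_rng]

theorem deg_eq_zero_of_isVertex {v : Λ.M} (hv : Λ.IsVertex v) : Λ.deg v = 0 := by
  rw [← hv, Λ.deg_rng]

theorem srcV_of_isVertex (v : Λ.Vtx) : Λ.srcV v.1 = v :=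
  Subtype.ext (src_eq_of_isVertex v.2)

theorem srcV_comp {μ ν : Λ.M} (h : Λ.Composable μ ν) : Λ.srcV (Λ.comp μ ν) = Λ.srcV ν :=
  Subtype.ext (Λ.src_comp μ ν h)

theorem exists_factor_edge {x : Λ.M} {j : Fin k} (hj : Λ.deg x j ≠ 0) :
    ∃ f μ, Λ.Composable f μ ∧ Λ.comp f μ = x ∧ Λ.deg f = Pi.single j 1 ∧
      Λ.deg x = Pi.single j 1 + Λ.deg μ := by
  obtain ⟨p, ⟨hp, hx, hf, hμ⟩, -⟩ :=
    Λ.factor x (Pi.single j 1) (Λ.deg x - Pi.single j 1) (Pi.single_one_add_tsub hj).symm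
  exact ⟨p.1, p.2, hp, hx, hf, by rw [hμ, Pi.single_one_add_tsub hj]⟩

theorem factor_unique {x μ ν μ' ν' : Λ.M}
    (h : Λ.Composable μ ν) (hx : Λ.comp μ ν = x)
    (h' : Λ.Composable μ' ν') (hx' : Λ.comp μ' ν' = x)
    (hd : Λ.deg μ = Λ.deg μ') : μ = μ' ∧ ν = ν' := by
  have hdx : Λ.deg x = Λ.deg μ + Λ.deg ν := by rw [← hx, Λ.deg_comp μ ν h]
  have hdν : Λ.deg ν' = Λ.deg ν := by
    rw [← hx', Λ.deg_comp μ' ν' h', ← hd] at hdx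
    exact add_left_cancel hdx
  obtain ⟨p, -, hu⟩ := Λ.factor x (Λ.deg μ) (Λ.deg ν) hdx
  have e := (hu (μ, ν) ⟨h, hx, rfl, rfl⟩).trans (hu (μ', ν') ⟨h', hx', hd.symm, hdν⟩).symm
  exact Prod.ext_iff.mp e

theorem comp_injOn (μ : Λ.M) (m : Fin k → ℕ) :
    Set.InjOn (Λ.comp μ) (Λ.leSet (Λ.src μ) m) :=
  fun _ hν _ hν' hcomp => (factor_unique hν.1.symm hcomp hν'.1.symm rfl rfl).2

theorem edgeSet_rng_nonempty_of_src {ν e : Λ.M} {i : Fin k} (he : e ∈ Λ.edgeSet (Λ.src ν) i) :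
    (Λ.edgeSet (Λ.rng ν) i).Nonempty := by
  have hc : Λ.Composable ν e := he.1.symm
  obtain ⟨p, ⟨hp, hx, hf, -⟩, -⟩ := Λ.factor (Λ.comp ν e) (Pi.single i 1) (Λ.deg ν)
    (by rw [Λ.deg_comp ν e hc, he.2, add_comm])
  exact ⟨p.1, by rw [← Λ.rng_comp ν e hc, ← hx, Λ.rng_comp p.1 p.2 hp], hf⟩

theorem edgeSet_src_nonempty_of_edge (hlc : Λ.LocallyConvex) {f : Λ.M} {i j : Fin k}
    (hij : i ≠ j) (hf : Λ.deg f = Pi.single j 1) (h : (Λ.edgeSet (Λ.rng f) i).Nonempty) :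
    (Λ.edgeSet (Λ.src f) i).Nonempty := by
  obtain ⟨e, he, hde⟩ := h
  rcases hij.lt_or_gt with hlt | hgt
  · obtain ⟨-, f', hf', hdf'⟩ := hlc i j hlt e f hde hf he
    exact ⟨f', hf'.symm, hdf'⟩
  · obtain ⟨⟨f', hf', hdf'⟩, -⟩ := hlc j i hgt f e hf hde he.symm
    exact ⟨f', hf'.symm, hdf'⟩

theorem edgeSet_src_nonempty (hlc : Λ.LocallyConvex) {i : Fin k} {x : Λ.M}
    (hx : Λ.deg x i = 0) (h : (Λ.edgeSet (Λ.rng x) i).Nonempty) :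
    (Λ.edgeSet (Λ.src x) i).Nonempty := by
  obtain ⟨n, hn⟩ : ∃ n, Λ.deg x = n := ⟨_, rfl⟩
  induction n using WellFoundedLT.induction generalizing x with
  | _ n ih =>
  by_cases hn0 : n = 0
  · rwa [src_eq_rng_of_deg_eq_zero (hn.trans hn0)]
  obtain ⟨j, hj⟩ := Function.ne_iff.mp hn0
  obtain ⟨f, μ, hfμ, rfl, hf, hμ⟩ := exists_factor_edge (hn ▸ hj : Λ.deg _ j ≠ 0)
  have hij : i ≠ j := by rintro rfl; exact hj (hn ▸ hx)
  have hμi : Λ.deg μ i = 0 := by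
    simpa [hμ, Pi.single_apply, hij] using hx
  rw [Λ.rng_comp f μ hfμ] at h
  rw [Λ.src_comp f μ hfμ]
  refine ih _ (hn ▸ hμ ▸ lt_add_of_pos_left _ (Pi.single_pos.2 one_pos)) hμi ?_ rfl
  rw [← hfμ]
  exact edgeSet_src_nonempty_of_edge hlc hij hf h

theorem leSet_zero {v : Λ.M} (hv : Λ.IsVertex v) : Λ.leSet v 0 = {v} := by
  ext x
  refine ⟨fun ⟨hxv, hx0, _⟩ => ?_, ?_⟩
  · rw [Set.mem_singleton_iff, eq_rng_of_deg_eq_zero (le_antisymm hx0 fun _ => Nat.zero_le _), hxv]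
  · rintro rfl
    refine ⟨hv, (deg_eq_zero_of_isVertex hv).le, fun i hi => ?_⟩
    rw [deg_eq_zero_of_isVertex hv] at hi
    exact absurd hi (Pi.not_add_single_one_le 0 i)

theorem edgeSet_subset_leSet_single (v : Λ.M) (i : Fin k) :
    Λ.edgeSet v i ⊆ Λ.leSet v (Pi.single i 1) := fun _ hx =>
  ⟨hx.1, hx.2.le, fun j hj => absurd (hx.2 ▸ hj) (Pi.not_add_single_one_le _ j)⟩

theorem leSet_single_of_nonempty {v : Λ.M} {i : Fin k}
    (hne : (Λ.edgeSet v i).Nonempty) : Λ.leSet v (Pi.single i 1) = Λ.edgeSet v i := by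
  refine subset_antisymm (fun x ⟨hxv, hxi, hx⟩ => ?_) (edgeSet_subset_leSet_single v i)
  rcases Pi.eq_zero_or_eq_single_of_le_single_one hxi with h0 | h1
  · rw [src_eq_rng_of_deg_eq_zero h0, hxv] at hx
    exact absurd hne (hx i (by simp [h0]))
  · exact ⟨hxv, h1⟩

theorem leSet_single_of_empty {v : Λ.M} (hv : Λ.IsVertex v) {i : Fin k}
    (he : ¬(Λ.edgeSet v i).Nonempty) : Λ.leSet v (Pi.single i 1) = {v} := by
  ext x
  refine ⟨fun ⟨hxv, hxi, _⟩ => ?_, ?_⟩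
  · rcases Pi.eq_zero_or_eq_single_of_le_single_one hxi with h0 | h1
    · rw [Set.mem_singleton_iff, eq_rng_of_deg_eq_zero h0, hxv]
    · exact absurd ⟨x, hxv, h1⟩ he
  · rintro rfl
    refine ⟨hv, by simp [deg_eq_zero_of_isVertex hv], fun j hj => ?_⟩
    obtain rfl : j = i := by
      by_contra hji
      simpa [deg_eq_zero_of_isVertex hv, hji] using hj j
    rwa [src_eq_of_isVertex hv]

theorem finite_leSet (hrf : Λ.RowFinite) {v : Λ.M} (hv : Λ.IsVertex v) (n : Fin k → ℕ) :
    (Λ.leSet v n).Finite := by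
  refine ((Set.finite_Iic n).biUnion fun p _ => hrf v p hv).subset ?_
  rintro x ⟨hxv, hxn, -⟩
  exact Set.mem_biUnion (Set.mem_Iic.2 hxn) ⟨hxv, rfl⟩

theorem deg_eq_of_mem_leSet_single {v : Λ.M} (hv : Λ.IsVertex v) {i : Fin k} {x y : Λ.M}
    (hx : x ∈ Λ.leSet v (Pi.single i 1)) (hy : y ∈ Λ.leSet v (Pi.single i 1)) :
    Λ.deg x = Λ.deg y := by
  by_cases hne : (Λ.edgeSet v i).Nonempty
  · rw [leSet_single_of_nonempty hne] at hx hy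
    rw [hx.2, hy.2]
  · rw [leSet_single_of_empty hv hne] at hx hy
    rw [hx, hy]

theorem leSet_single_add_subset (hlc : Λ.LocallyConvex) {v : Λ.M} (hv : Λ.IsVertex v)
    (i : Fin k) (m : Fin k → ℕ) :
    Λ.leSet v (Pi.single i 1 + m) ⊆
      ⋃ μ ∈ Λ.leSet v (Pi.single i 1), Λ.comp μ '' Λ.leSet (Λ.src μ) m := by
  rintro x ⟨hxv, hxn, hx⟩
  by_cases hxi : Λ.deg x i = 0
  · have hxm : Λ.deg x ≤ m := Pi.le_of_le_single_add hxn (by simp [hxi])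
    have hsx : ¬(Λ.edgeSet (Λ.src x) i).Nonempty :=
      hx i (by rw [add_comm]; exact add_le_add_right hxm _)
    have hve : ¬(Λ.edgeSet v i).Nonempty := fun h =>
      hsx (edgeSet_src_nonempty hlc hxi (hxv ▸ h))
    have hxs : Λ.rng x = Λ.src v := by rw [src_eq_of_isVertex hv, hxv]
    refine Set.mem_biUnion (by rw [leSet_single_of_empty hv hve]; rfl)
      ⟨x, ⟨hxs, hxm, fun j hj => hx j (hj.trans le_add_self)⟩, ?_⟩
    rw [← hxv, Λ.id_comp]
  · obtain ⟨f, μ, hfμ, rfl, hf, hμ⟩ := exists_factor_edge hxi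
    rw [Λ.rng_comp f μ hfμ] at hxv
    rw [Λ.src_comp f μ hfμ, hμ] at hx
    rw [hμ] at hxn
    refine Set.mem_biUnion (edgeSet_subset_leSet_single _ _ ⟨hxv, hf⟩)
      ⟨μ, ⟨hfμ.symm, (add_le_add_iff_left _).1 hxn, fun j hj => hx j ?_⟩, rfl⟩
    rw [add_assoc]
    exact add_le_add_right hj _

theorem biUnion_subset_leSet_single_add {v : Λ.M} (hv : Λ.IsVertex v)
    (i : Fin k) (m : Fin k → ℕ) :
    ⋃ μ ∈ Λ.leSet v (Pi.single i 1), Λ.comp μ '' Λ.leSet (Λ.src μ) m ⊆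
      Λ.leSet v (Pi.single i 1 + m) := by
  simp only [Set.iUnion_subset_iff]
  rintro μ ⟨hμv, hμi, hμ⟩ _ ⟨ν, ⟨hνμ, hνm, hν⟩, rfl⟩
  have hc : Λ.Composable μ ν := hνμ.symm
  rcases Pi.eq_zero_or_eq_single_of_le_single_one hμi with h0 | h1
  · obtain rfl : μ = v := (eq_rng_of_deg_eq_zero h0).trans hμv
    have hve : ¬(Λ.edgeSet μ i).Nonempty := by
      have := hμ i (by simp [h0])
      rwa [src_eq_of_isVertex hv] at this
    rw [src_eq_of_isVertex hv] at hνμ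
    have hνv : Λ.comp μ ν = ν := by rw [← hνμ, Λ.id_comp]
    rw [hνv]
    refine ⟨hνμ, hνm.trans le_add_self, fun j hj => ?_⟩
    by_cases hji : j = i
    · subst hji
      rintro ⟨e, he⟩
      exact hve (hνμ ▸ edgeSet_rng_nonempty_of_src he)
    · have hνi : (Λ.deg ν + Pi.single j 1 : Fin k → ℕ) i ≤ m i := by
        simpa [Pi.single_apply, Ne.symm hji] using hνm i
      exact hν j (Pi.le_of_le_single_add hj hνi)
  · refine ⟨(Λ.rng_comp μ ν hc).trans hμv, ?_, fun j hj => ?_⟩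
    · rw [Λ.deg_comp μ ν hc, h1]
      exact add_le_add_right hνm _
    · rw [Λ.deg_comp μ ν hc, h1, add_assoc] at hj
      rw [Λ.src_comp μ ν hc]
      exact hν j ((add_le_add_iff_left _).1 hj)

theorem leSet_single_add (hlc : Λ.LocallyConvex) {v : Λ.M} (hv : Λ.IsVertex v)
    (i : Fin k) (m : Fin k → ℕ) :
    Λ.leSet v (Pi.single i 1 + m) =
      ⋃ μ ∈ Λ.leSet v (Pi.single i 1), Λ.comp μ '' Λ.leSet (Λ.src μ) m :=
  (leSet_single_add_subset hlc hv i m).antisymm (biUnion_subset_leSet_single_add hv i m)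

theorem pairwiseDisjoint_comp_leSet {v : Λ.M} (hv : Λ.IsVertex v) (i : Fin k)
    (m : Fin k → ℕ) :
    (Λ.leSet v (Pi.single i 1)).PairwiseDisjoint fun μ => Λ.comp μ '' Λ.leSet (Λ.src μ) m := by
  intro μ hμ μ' hμ' hne
  refine Set.disjoint_left.mpr ?_
  rintro _ ⟨ν, hν, rfl⟩ ⟨ν', hν', hx⟩
  exact hne (factor_unique hν.1.symm rfl hν'.1.symm hx (deg_eq_of_mem_leSet_single hv hμ hμ')).1

theorem finsum_leSet_single_add {β : Type*} [AddCommMonoid β] (hrf : Λ.RowFinite)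
    (hlc : Λ.LocallyConvex) {v : Λ.M} (hv : Λ.IsVertex v) (i : Fin k) (m : Fin k → ℕ)
    (f : Λ.Vtx → β) :
    ∑ᶠ x ∈ Λ.leSet v (Pi.single i 1 + m), f (Λ.srcV x) =
      ∑ᶠ μ ∈ Λ.leSet v (Pi.single i 1), ∑ᶠ ν ∈ Λ.leSet (Λ.src μ) m, f (Λ.srcV ν) := by
  rw [leSet_single_add hlc hv, finsum_mem_biUnion (pairwiseDisjoint_comp_leSet hv i m)
    (finite_leSet hrf hv _) fun μ _ => (finite_leSet hrf (Λ.isVertex_src μ) m).image _]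
  refine finsum_mem_congr rfl fun μ _ => ?_
  rw [finsum_mem_image (comp_injOn μ m)]
  exact finsum_mem_congr rfl fun ν hν => by rw [srcV_comp hν.1.symm]

theorem IsGraphTrace.of_leSet_single (hrf : Λ.RowFinite) (hlc : Λ.LocallyConvex)
    {g : Λ.Vtx → ℝ≥0}
    (h : ∀ (v : Λ.Vtx) (i : Fin k), g v = ∑ᶠ x ∈ Λ.leSet v.1 (Pi.single i 1), g (Λ.srcV x)) :
    Λ.IsGraphTrace g := by
  intro v n
  induction n using WellFoundedLT.induction generalizing v with
  | _ n ih =>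
  by_cases hn : n = 0
  · rw [hn, leSet_zero v.2, finsum_mem_singleton, srcV_of_isVertex]
  obtain ⟨i, hi⟩ := Function.ne_iff.mp hn
  rw [← Pi.single_one_add_tsub hi, finsum_leSet_single_add hrf hlc v.2, h v i]
  exact finsum_mem_congr rfl fun μ _ => ih _ (Pi.tsub_single_one_lt hi) _

end KGraph

open KGraph in
/-- A function on the vertices of a row-finite locally convex
`k`-graph is a graph trace iff for every vertex `v` and every `i` with
`vΛ^{e_i} ≠ ∅` one has `g v = Σ_{λ ∈ vΛ^{e_i}} g (s λ)`. -/
theorem isGraphTrace_iff_edge_condition {k : ℕ} (Λ : KGraph k)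
    (hrf : Λ.RowFinite) (hlc : Λ.LocallyConvex) (g : Λ.Vtx → ℝ≥0) :
    Λ.IsGraphTrace g ↔
      ∀ (v : Λ.Vtx) (i : Fin k),
        {x | Λ.rng x = v.1 ∧ Λ.deg x = Pi.single i 1}.Nonempty →
        g v = ∑ᶠ x ∈ {x | Λ.rng x = v.1 ∧ Λ.deg x = Pi.single i 1}, g (Λ.srcV x) := by
  refine ⟨fun hg v i hne => ?_, fun h => IsGraphTrace.of_leSet_single hrf hlc fun v i => ?_⟩
  · rw [hg v (Pi.single i 1), leSet_single_of_nonempty hne]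
    rfl
  · by_cases hne : (Λ.edgeSet v.1 i).Nonempty
    · rw [leSet_single_of_nonempty hne]
      exact h v i hne
    · rw [leSet_single_of_empty v.2 hne, finsum_mem_singleton, srcV_of_isVertex]
end

section
/- Let n ≥ 1, let Λ = Δ(n) be the 2-graph T_2 ×_1 ℤ/nℤ, let θ ∈ ℝ and let c = d_*c_θ be the induced 𝕋-valued 2-cocycle on Λ. Let s be a Cuntz–Krieger (Λ,c)-family in a C*-algebra B, let μ_i, ν_i, α_i, U and V be as follows: μ_i := (a^n b^0, i), ν_i := (a^{n−1} b^1, i), α_0, …, α_{n−1} ∈ 𝕋 with α_i = e^{2πiθ} α_{i−1} for 1 ≤ i ≤ n−1, U := Σ_{i∈ℤ/nℤ} s_{μ_i}, V := Σ_{i∈ℤ/nℤ} α_i s_{ν_i}, and write (a,j) := (a^1 b^0, j). Then U and V commute with s_{(a,j)} and with s_{(a,j)}* for all 0 ≤ j ≤ n−2, and the C*-subalgebra of B generated by {s_λ : λ ∈ Λ} equals the C*-subalgebra of B generated by {U, V} ∪ {s_{(a,j)} : 0 ≤ j ≤ n−2}. -/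
open scoped BigOperators NNReal ENNReal

/-- The `2`-graph `Δ(n) = T₂ ×₁ ℤ/nℤ`: morphisms are pairs `((s,t), i)` with degree
`(s,t)`, range `i`, source `i + s + t`, and composition
`((s,t), i)((s',t'), i+s+t) = ((s+s',t+t'), i)`. -/
def Delta (n : ℕ) : KGraph 2 where
  M := (ℕ × ℕ) × ZMod n
  countableM := by
    cases n with
    | zero => exact inferInstanceAs (Countable ((ℕ × ℕ) × ℤ))
    | succ m => exact inferInstanceAs (Countable ((ℕ × ℕ) × Fin (m + 1)))
  nonemptyM := by infer_instance
  src x := ((0, 0), x.2 + x.1.1 + x.1.2)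
  rng x := ((0, 0), x.2)
  comp x y := ((x.1.1 + y.1.1, x.1.2 + y.1.2), x.2)
  deg x := ![x.1.1, x.1.2]
  src_src x := by simp
  rng_src x := by simp
  src_rng x := by simp
  rng_rng x := by simp
  comp_id x := by simp
  id_comp x := by simp
  src_comp x y h := by
    have h2 : x.2 + (x.1.1 : ZMod n) + (x.1.2 : ZMod n) = y.2 :=
      congrArg Prod.snd h
    refine Prod.ext rfl ?_
    push_cast
    rw [← h2]
    ring
  rng_comp x y h := rfl
  comp_assoc x y z h1 h2 := by
    refine Prod.ext (Prod.ext ?_ ?_) rfl <;> simp [Nat.add_assoc]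
  deg_src x := by
    funext i
    fin_cases i <;> rfl
  deg_rng x := by
    funext i
    fin_cases i <;> rfl
  deg_comp x y h := by
    funext i
    fin_cases i <;> simp
  factor x m m' h := by
    refine ⟨(((m 0, m 1), x.2), ((m' 0, m' 1), x.2 + m 0 + m 1)), ⟨rfl, ?_, ?_, ?_⟩, ?_⟩
    · have h0 : x.1.1 = m 0 + m' 0 := by
        have := congrFun h 0; simpa using this
      have h1 : x.1.2 = m 1 + m' 1 := by
        have := congrFun h 1; simpa using this
      refine Prod.ext (Prod.ext ?_ ?_) rfl <;> simp [h0, h1]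
    · funext i; fin_cases i <;> rfl
    · funext i; fin_cases i <;> rfl
    · rintro ⟨a, b⟩ ⟨hcomp, heq, hda, hdb⟩
      have ha0 : a.1.1 = m 0 := by
        have := congrFun hda 0; simpa using this
      have ha1 : a.1.2 = m 1 := by
        have := congrFun hda 1; simpa using this
      have hb0 : b.1.1 = m' 0 := by
        have := congrFun hdb 0; simpa using this
      have hb1 : b.1.2 = m' 1 := by
        have := congrFun hdb 1; simpa using this
      have ha2 : a.2 = x.2 := congrArg (fun z => z.2) heq
      have hb2 : b.2 = x.2 + (m 0 : ZMod n) + (m 1 : ZMod n) := by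
        have := congrArg Prod.snd hcomp
        simp only at this
        rw [← this, ha2, ha0, ha1]
      refine Prod.ext (Prod.ext (Prod.ext ha0 ha1) ha2) (Prod.ext (Prod.ext hb0 hb1) hb2)

/-- The `𝕋`-valued `2`-cocycle `d_* c_θ` on `Δ(n)` induced by the cocycle
`c_θ(m, m') = e^{2πiθ m₂ m'₁}` on `ℤ²`. -/
noncomputable def deltaCocycle (n : ℕ) (θ : ℝ) : (Delta n).M → (Delta n).M → ℂ :=
  fun x y => Complex.exp (2 * Real.pi * Complex.I * θ * ((x.1.2 : ℂ) * (y.1.1 : ℂ)))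

/-! In `Δ(n)` each vertex emits exactly one path of each degree, so the Cuntz–Krieger relations
turn every product `s_μ s_ν` into a scalar multiple of a single `s_λ` (or zero). `U` and `V` are
sums `∑ z, f z • s_{(m, z)}` over loops, i.e. with `m₁ + m₂ ≡ 0 mod n`; such a sum commutes with
`s_{(a, z)}` as soon as `f (z + 1) = e^{2πiθ m₂} f z`, which for `V` is the recursion defining the
`α_i`. It then also commutes with `s_{(a, z)}*`, because `s_{(a, z)}` is a partial isometry from
the vertex projection `s_{z+1}` onto `s_z`, and a sum over loops commutes with every vertex
projection. For generation, `s_{(a^{n-1}, 0)}* U = s_{(a, n-1)}` recovers the one missing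
horizontal edge, `s_{(a^{n-1}, z+1)}* V = α · s_{(b, z)}` recovers the vertical edges, and every
`s_λ` is a product of edges. -/

open Real

set_option linter.overlappingInstances false

theorem Commute.star_right_of_mul_star_mul_self {R : Type*} [Semigroup R] [StarMul R] {x a : R}
    (ha : a * star a * a = a) (h : Commute x a) (h₁ : Commute x (a * star a))
    (h₂ : Commute x (star a * a)) : Commute x (star a) := by
  have ha' : star a * a * star a = star a := by simpa [mul_assoc] using congrArg star ha
  symm
  calc star a * x = star a * a * star a * x := by rw [ha']
    _ = star a * (a * star a * x) := by simp only [mul_assoc]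
    _ = star a * (x * (a * star a)) := by rw [h₁.eq]
    _ = star a * (x * a) * star a := by simp only [mul_assoc]
    _ = star a * a * x * star a := by rw [h.eq]; simp only [mul_assoc]
    _ = x * (star a * a) * star a := by rw [h₂.eq]
    _ = x * star a := by rw [mul_assoc, ha']

theorem finsum_fin_eq_sum_zmod {M : Type*} [AddCommMonoid M] (n : ℕ) [NeZero n] (g : ℕ → M) :
    ∑ᶠ i : Fin n, g i = ∑ z : ZMod n, g z.val := by
  obtain ⟨k, rfl⟩ := Nat.exists_eq_succ_of_ne_zero (NeZero.ne n)
  rw [finsum_eq_sum_of_fintype]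
  rfl

theorem ZMod.natCast_pred_self (n : ℕ) [NeZero n] : ((n - 1 : ℕ) : ZMod n) = -1 := by
  rw [Nat.cast_pred (NeZero.pos n), ZMod.natCast_self, zero_sub]

namespace Delta

variable {n : ℕ} {θ : ℝ} {B : Type*} [NonUnitalCStarAlgebra B] [NormedSpace ℂ B]
  {s : (Delta n).M → B}

theorem mul_eq_smul (hs : (Delta n).IsCKFamily (deltaCocycle n θ) s) {p q p' q' : ℕ}
    {z z' : ZMod n} (h : z + p + q = z') :
    s ((p, q), z) * s ((p', q'), z') =
      Complex.exp (2 * π * Complex.I * θ * (q * p')) • s ((p + p', q + q'), z) :=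
  hs.2.2.1 ((p, q), z) ((p', q'), z') (by rw [← h]; rfl)

theorem horizontal_mul (hs : (Delta n).IsCKFamily (deltaCocycle n θ) s) {p p' q' : ℕ}
    {z z' : ZMod n} (h : z + p = z') :
    s ((p, 0), z) * s ((p', q'), z') = s ((p + p', q'), z) := by
  simpa using mul_eq_smul hs (q := 0) (p' := p') (q' := q') (z := z) (by simpa using h)

theorem mul_vertical (hs : (Delta n).IsCKFamily (deltaCocycle n θ) s) {p q q' : ℕ}
    {z z' : ZMod n} (h : z + p + q = z') :
    s ((p, q), z) * s ((0, q'), z') = s ((p, q + q'), z) := by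
  simpa using mul_eq_smul hs (p' := 0) (q' := q') h

theorem vertex_mul (hs : (Delta n).IsCKFamily (deltaCocycle n θ) s) (p q : ℕ) (z : ZMod n) :
    s ((0, 0), z) * s ((p, q), z) = s ((p, q), z) := by
  simpa using horizontal_mul hs (p := 0) (p' := p) (q' := q) (z := z) (by simp)

theorem mul_vertex (hs : (Delta n).IsCKFamily (deltaCocycle n θ) s) {p q : ℕ} {z z' : ZMod n}
    (h : z + p + q = z') : s ((p, q), z) * s ((0, 0), z') = s ((p, q), z) := by
  simpa using mul_vertical hs (q' := 0) h

theorem star_vertex (hs : (Delta n).IsCKFamily (deltaCocycle n θ) s) (z : ZMod n) :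
    star (s ((0, 0), z)) = s ((0, 0), z) :=
  (hs.1 ((0, 0), z) rfl).1

theorem vertex_mul_vertex_of_ne (hs : (Delta n).IsCKFamily (deltaCocycle n θ) s) {z z' : ZMod n}
    (h : z ≠ z') : s ((0, 0), z) * s ((0, 0), z') = 0 :=
  hs.2.1 ((0, 0), z) ((0, 0), z') rfl rfl fun hc => h (congrArg Prod.snd hc)

theorem star_mul_self (hs : (Delta n).IsCKFamily (deltaCocycle n θ) s) (p q : ℕ) (z : ZMod n) :
    star (s ((p, q), z)) * s ((p, q), z) = s ((0, 0), z + p + q) :=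
  hs.2.2.2.1 _

theorem mul_eq_zero_of_ne (hs : (Delta n).IsCKFamily (deltaCocycle n θ) s) {p q p' q' : ℕ}
    {z z' : ZMod n} (h : z + p + q ≠ z') : s ((p, q), z) * s ((p', q'), z') = 0 := by
  rw [← mul_vertex hs rfl, ← vertex_mul hs p' q' z', mul_assoc, ← mul_assoc (s ((0, 0), _)),
    vertex_mul_vertex_of_ne hs h, zero_mul, mul_zero]

theorem star_mul_eq_zero_of_ne (hs : (Delta n).IsCKFamily (deltaCocycle n θ) s) {p q p' q' : ℕ}
    {z z' : ZMod n} (h : z ≠ z') : star (s ((p, q), z)) * s ((p', q'), z') = 0 := by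
  rw [← vertex_mul hs p q z, ← vertex_mul hs p' q' z', star_mul, star_vertex hs, mul_assoc,
    ← mul_assoc (s ((0, 0), z)), vertex_mul_vertex_of_ne hs h, zero_mul, mul_zero]

theorem leSet_vertex_single_zero (z : ZMod n) :
    (Delta n).leSet ((0, 0), z) ![1, 0] = {((1, 0), z)} := by
  refine Set.eq_singleton_iff_unique_mem.2 ⟨⟨rfl, ?_, ?_⟩, ?_⟩
  · intro i; fin_cases i <;> simp [Delta]
  · intro i hi
    have := hi i
    fin_cases i <;> simp [Delta] at this
  · rintro ⟨⟨p, q⟩, w⟩ ⟨hr, hd, hmax⟩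
    have hw : w = z := congrArg Prod.snd hr
    have hp : p ≤ 1 := by simpa [Delta] using hd 0
    have hq : q = 0 := by simpa [Delta] using hd 1
    subst hw hq
    obtain rfl | rfl : p = 0 ∨ p = 1 := by omega
    · refine absurd ⟨((1, 0), w), by simp [Delta], ?_⟩ (hmax 0 ?_)
      · intro i; fin_cases i <;> simp [Delta]
      · funext i; fin_cases i <;> simp [Delta]
    · rfl

theorem edge_mul_star_edge (hs : (Delta n).IsCKFamily (deltaCocycle n θ) s) (z : ZMod n) :
    s ((1, 0), z) * star (s ((1, 0), z)) = s ((0, 0), z) := by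
  rw [hs.2.2.2.2 ((0, 0), z) ![1, 0] rfl, leSet_vertex_single_zero]
  exact (finsum_mem_singleton (f := fun x : (Delta n).M => s x * star (s x))
    (a := ((1, 0), z))).symm

section membership

variable {σ : Type*} [SetLike σ B] [MulMemClass σ B] {S : σ}

theorem succ_horizontal_mem (hs : (Delta n).IsCKFamily (deltaCocycle n θ) s) {p : ℕ}
    {w : ZMod n} (ha : ∀ j ≤ p, s ((1, 0), w + j) ∈ S) : s ((p + 1, 0), w) ∈ S := by
  induction p generalizing w with
  | zero => simpa using ha 0 le_rfl
  | succ p ih =>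
    rw [add_comm, ← horizontal_mul hs (p := 1) rfl]
    refine mul_mem (by simpa using ha 0 (Nat.zero_le _)) (ih fun j hj => ?_)
    simpa only [Nat.cast_add, Nat.cast_one, add_assoc, add_comm (1 : ZMod n)]
      using ha (j + 1) (by omega)

variable [StarMemClass σ B]

theorem horizontal_mem (hs : (Delta n).IsCKFamily (deltaCocycle n θ) s)
    (ha : ∀ z, s ((1, 0), z) ∈ S) (p : ℕ) (z : ZMod n) : s ((p, 0), z) ∈ S := by
  cases p with
  | zero => rw [← edge_mul_star_edge hs]; exact mul_mem (ha z) (star_mem (ha z))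
  | succ p => exact succ_horizontal_mem hs fun j _ => ha _

theorem mem_of_edges_mem (hs : (Delta n).IsCKFamily (deltaCocycle n θ) s)
    (ha : ∀ z, s ((1, 0), z) ∈ S) (hb : ∀ z, s ((0, 1), z) ∈ S) (x : (Delta n).M) : s x ∈ S := by
  have vertical : ∀ q z, s ((0, q), z) ∈ S := by
    intro q
    induction q with
    | zero => exact horizontal_mem hs ha 0
    | succ q ih =>
      intro z
      rw [add_comm, ← mul_vertical hs (p := 0) (q := 1) (z' := z + 1) (by simp)]
      exact mul_mem (hb z) (ih _)
  obtain ⟨⟨p, q⟩, z⟩ := x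
  have h := horizontal_mul hs (p := p) (p' := 0) (q' := q) (z := z) rfl
  rw [add_zero] at h
  rw [← h]
  exact mul_mem (horizontal_mem hs ha p z) (vertical q _)

end membership

section deltaSum

variable [NeZero n]

def deltaSum (s : (Delta n).M → B) (f : ZMod n → ℂ) (m : ℕ × ℕ) : B :=
  ∑ z, f z • s (m, z)

theorem deltaSum_mem {σ : Type*} [SetLike σ B] [AddSubmonoidClass σ B] [SMulMemClass σ ℂ B]
    {S : σ} (f : ZMod n → ℂ) (m : ℕ × ℕ) (h : ∀ z, s (m, z) ∈ S) : deltaSum s f m ∈ S :=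
  sum_mem fun z _ => SMulMemClass.smul_mem _ (h z)

theorem deltaSum_mul [IsScalarTower ℂ B B] (hs : (Delta n).IsCKFamily (deltaCocycle n θ) s)
    (f : ZMod n → ℂ) (p q p' q' : ℕ) (w : ZMod n) :
    deltaSum s f (p, q) * s ((p', q'), w) =
      (f (w - p - q) * Complex.exp (2 * π * Complex.I * θ * (q * p'))) •
        s ((p + p', q + q'), w - p - q) := by
  rw [deltaSum, Finset.sum_mul, Finset.sum_eq_single (w - p - q)]
  · rw [smul_mul_assoc, mul_eq_smul hs (by ring), smul_smul]
  · intro z _ hz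
    rw [smul_mul_assoc, mul_eq_zero_of_ne hs (fun h => hz (by rw [← h]; ring)), smul_zero]
  · simp

theorem mul_deltaSum [SMulCommClass ℂ B B] (hs : (Delta n).IsCKFamily (deltaCocycle n θ) s)
    (f : ZMod n → ℂ) (p q p' q' : ℕ) (w : ZMod n) :
    s ((p', q'), w) * deltaSum s f (p, q) =
      (f (w + p' + q') * Complex.exp (2 * π * Complex.I * θ * (q' * p))) •
        s ((p' + p, q' + q), w) := by
  rw [deltaSum, Finset.mul_sum, Finset.sum_eq_single (w + p' + q')]
  · rw [mul_smul_comm, mul_eq_smul hs rfl, smul_smul]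
  · intro z _ hz
    rw [mul_smul_comm, mul_eq_zero_of_ne hs (Ne.symm hz), smul_zero]
  · simp

theorem star_horizontal_mul_deltaSum [SMulCommClass ℂ B B]
    (hs : (Delta n).IsCKFamily (deltaCocycle n θ) s) (f : ZMod n → ℂ) (a p q : ℕ) (w : ZMod n) :
    star (s ((a, 0), w)) * deltaSum s f (a + p, q) = f w • s ((p, q), w + a) := by
  rw [deltaSum, Finset.mul_sum, Finset.sum_eq_single w]
  · rw [mul_smul_comm, ← horizontal_mul hs rfl, ← mul_assoc, star_mul_self hs, Nat.cast_zero,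
      add_zero, vertex_mul hs]
  · intro z _ hz
    rw [mul_smul_comm, star_mul_eq_zero_of_ne hs (Ne.symm hz), smul_zero]
  · simp

section commute

variable [IsScalarTower ℂ B B] [SMulCommClass ℂ B B]

theorem commute_deltaSum_vertex (hs : (Delta n).IsCKFamily (deltaCocycle n θ) s)
    {f : ZMod n → ℂ} {p q : ℕ} (hpq : ((p + q : ℕ) : ZMod n) = 0) (z : ZMod n) :
    Commute (deltaSum s f (p, q)) (s ((0, 0), z)) := by
  have hz : z - p - q = z := by rw [sub_sub, ← Nat.cast_add, hpq, sub_zero]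
  rw [Commute, SemiconjBy, deltaSum_mul hs, mul_deltaSum hs, hz]
  simp

theorem commute_deltaSum_edge (hs : (Delta n).IsCKFamily (deltaCocycle n θ) s)
    {f : ZMod n → ℂ} {p q : ℕ} (hpq : ((p + q : ℕ) : ZMod n) = 0) {z : ZMod n}
    (hf : f (z + 1) = Complex.exp (2 * π * Complex.I * θ * q) * f z) :
    Commute (deltaSum s f (p, q)) (s ((1, 0), z)) := by
  have hz : z - p - q = z := by rw [sub_sub, ← Nat.cast_add, hpq, sub_zero]
  rw [Commute, SemiconjBy, deltaSum_mul hs, mul_deltaSum hs, hz]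
  simp only [Nat.cast_one, Nat.cast_zero, add_zero, zero_add, zero_mul, mul_zero, mul_one,
    Complex.exp_zero, hf]
  rw [mul_comm, add_comm]

theorem commute_deltaSum_star_edge (hs : (Delta n).IsCKFamily (deltaCocycle n θ) s)
    {f : ZMod n → ℂ} {p q : ℕ} (hpq : ((p + q : ℕ) : ZMod n) = 0) {z : ZMod n}
    (hf : f (z + 1) = Complex.exp (2 * π * Complex.I * θ * q) * f z) :
    Commute (deltaSum s f (p, q)) (star (s ((1, 0), z))) := by
  refine (commute_deltaSum_edge hs hpq hf).star_right_of_mul_star_mul_self ?_ ?_ ?_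
  · rw [edge_mul_star_edge hs, vertex_mul hs]
  · rw [edge_mul_star_edge hs]
    exact commute_deltaSum_vertex hs hpq z
  · rw [star_mul_self hs]
    exact commute_deltaSum_vertex hs hpq _

end commute

section generation

variable {σ : Type*} [SetLike σ B] [MulMemClass σ B] [StarMemClass σ B] {S : σ}

theorem edge_mem_of_generators_mem [SMulCommClass ℂ B B]
    (hs : (Delta n).IsCKFamily (deltaCocycle n θ) s) (hU : deltaSum s 1 (n, 0) ∈ S)
    (hgen : ∀ j : ℕ, j + 2 ≤ n → s ((1, 0), (j : ZMod n)) ∈ S) (z : ZMod n) :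
    s ((1, 0), z) ∈ S := by
  by_cases hz : z.val + 2 ≤ n
  · simpa using hgen z.val hz
  obtain rfl : z = -1 := by
    rw [← ZMod.natCast_pred_self, ← ZMod.natCast_zmod_val z]
    have := ZMod.val_lt z
    congr 1
    omega
  obtain rfl | hn := eq_or_ne n 1
  · simpa [deltaSum, Unique.eq_default (-1 : ZMod 1)] using hU
  -- the last edge is recovered from `U` by stripping off the path `a_0 ⋯ a_{n-2}`
  have hpath : s ((n - 1, 0), 0) ∈ S := by
    have := NeZero.pos n
    rw [show n - 1 = n - 2 + 1 by omega]
    exact succ_horizontal_mem hs fun j hj => by simpa using hgen j (by omega)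
  have h := star_horizontal_mul_deltaSum hs 1 (n - 1) 1 0 0
  rw [Nat.sub_add_cancel NeZero.one_le, zero_add, ZMod.natCast_pred_self, Pi.one_apply,
    one_smul] at h
  rw [← h]
  exact mul_mem (star_mem hpath) hU

theorem vertical_edge_mem [SMulCommClass ℂ B B] [SMulMemClass σ ℂ B]
    (hs : (Delta n).IsCKFamily (deltaCocycle n θ) s) {f : ZMod n → ℂ} (hf : ∀ z, ‖f z‖ = 1)
    (ha : ∀ z, s ((1, 0), z) ∈ S) (hV : deltaSum s f (n - 1, 1) ∈ S) (z : ZMod n) :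
    s ((0, 1), z) ∈ S := by
  have h := star_horizontal_mul_deltaSum hs f (n - 1) 0 1 (z + 1)
  rw [add_zero, ZMod.natCast_pred_self, add_neg_cancel_right] at h
  have hunit : starRingEnd ℂ (f (z + 1)) * f (z + 1) = 1 := by
    rw [Complex.conj_mul', hf]
    simp
  rw [← one_smul ℂ (s ((0, 1), z)), ← hunit, mul_smul, ← h]
  exact SMulMemClass.smul_mem _ (mul_mem (star_mem (horizontal_mem hs ha _ _)) hV)

end generation

theorem adjoin_range_eq [IsScalarTower ℂ B B] [SMulCommClass ℂ B B] [StarModule ℂ B]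
    (hs : (Delta n).IsCKFamily (deltaCocycle n θ) s) {f : ZMod n → ℂ} (hf : ∀ z, ‖f z‖ = 1) :
    NonUnitalStarAlgebra.adjoin ℂ (Set.range s) =
      NonUnitalStarAlgebra.adjoin ℂ ({deltaSum s 1 (n, 0), deltaSum s f (n - 1, 1)} ∪
        {x | ∃ j : ℕ, j + 2 ≤ n ∧ x = s ((1, 0), (j : ZMod n))}) := by
  set G : Set B := {deltaSum s 1 (n, 0), deltaSum s f (n - 1, 1)} ∪
    {x | ∃ j : ℕ, j + 2 ≤ n ∧ x = s ((1, 0), (j : ZMod n))}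
  have hG : G ⊆ NonUnitalStarAlgebra.adjoin ℂ G := NonUnitalStarAlgebra.subset_adjoin ℂ G
  refine le_antisymm (NonUnitalStarAlgebra.adjoin_le_iff.2 ?_)
    (NonUnitalStarAlgebra.adjoin_le_iff.2 ?_)
  · rintro _ ⟨x, rfl⟩
    have ha := edge_mem_of_generators_mem hs (hG (Or.inl (Or.inl rfl)))
      fun j hj => hG (Or.inr ⟨j, hj, rfl⟩)
    exact mem_of_edges_mem hs ha (vertical_edge_mem hs hf ha (hG (Or.inl (Or.inr rfl)))) x
  · have hrange : ∀ x, s x ∈ NonUnitalStarAlgebra.adjoin ℂ (Set.range s) :=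
      fun x => NonUnitalStarAlgebra.subset_adjoin ℂ _ ⟨x, rfl⟩
    rintro _ ((rfl | rfl) | hx)
    · exact deltaSum_mem _ _ fun z => hrange _
    · exact deltaSum_mem _ _ fun z => hrange _
    · obtain ⟨j, -, rfl⟩ := hx
      exact hrange _

end deltaSum

end Delta

open KGraph Real in
/-- For a Cuntz–Krieger `(Δ(n), d_* c_θ)`-family `s`, the unitaries
`U` and `V` commute with the `s_{(a,j)}` (`0 ≤ j ≤ n−2`) and their adjoints, and the
`C*`-subalgebra generated by `{s_λ}` equals the one generated by
`{U, V} ∪ {s_{(a,j)} : 0 ≤ j ≤ n−2}`. -/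
theorem delta_generators (n : ℕ) (hn : 0 < n) (θ : ℝ)
    {B : Type*} [NonUnitalCStarAlgebra B] [NormedSpace ℂ B] [StarModule ℂ B] [SMulCommClass ℂ B B]
    [IsScalarTower ℂ B B]
    (s : (Delta n).M → B) (hs : (Delta n).IsCKFamily (deltaCocycle n θ) s)
    (α : ℕ → ℂ) (hα1 : ∀ i ≤ n - 1, ‖α i‖ = 1)
    (hα2 : ∀ i, 1 ≤ i → i ≤ n - 1 →
      α i = Complex.exp (2 * π * Complex.I * θ) * α (i - 1))
    (U V : B)
    (hU : U = ∑ᶠ i : Fin n, s ((n, 0), (i : ZMod n)))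
    (hV : V = ∑ᶠ i : Fin n, α i • s ((n - 1, 1), (i : ZMod n))) :
    (∀ j : ℕ, j + 2 ≤ n →
      Commute U (s ((1, 0), (j : ZMod n))) ∧
      Commute U (star (s ((1, 0), (j : ZMod n)))) ∧
      Commute V (s ((1, 0), (j : ZMod n))) ∧
      Commute V (star (s ((1, 0), (j : ZMod n))))) ∧
    (NonUnitalStarAlgebra.adjoin ℂ (Set.range s)).topologicalClosure =
      (NonUnitalStarAlgebra.adjoin ℂ
        ({U, V} ∪ {x | ∃ j : ℕ, j + 2 ≤ n ∧ x = s ((1, 0), (j : ZMod n))})).topologicalClosure := by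
  have : NeZero n := ⟨hn.ne'⟩
  have hU' : U = Delta.deltaSum s 1 (n, 0) := by
    simp [hU, Delta.deltaSum, finsum_fin_eq_sum_zmod n fun i => s ((n, 0), (i : ZMod n))]
  have hV' : V = Delta.deltaSum s (fun z => α z.val) (n - 1, 1) := by
    simp [hV, Delta.deltaSum, finsum_fin_eq_sum_zmod n fun i => α i • s ((n - 1, 1), (i : ZMod n))]
  have hUn : ((n + 0 : ℕ) : ZMod n) = 0 := by simp
  have hVn : ((n - 1 + 1 : ℕ) : ZMod n) = 0 := by rw [Nat.sub_add_cancel hn, ZMod.natCast_self]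
  have hVf : ∀ j, j + 2 ≤ n → α ((j : ZMod n) + 1).val =
      Complex.exp (2 * π * Complex.I * θ * (1 : ℕ)) * α (j : ZMod n).val := by
    intro j hj
    rw [← Nat.cast_succ, ZMod.val_natCast_of_lt (by omega), ZMod.val_natCast_of_lt (by omega),
      hα2 (j + 1) (by omega) (by omega)]
    simp
  subst hU' hV'
  refine ⟨fun j hj => ⟨Delta.commute_deltaSum_edge hs hUn (by simp),
    Delta.commute_deltaSum_star_edge hs hUn (by simp), Delta.commute_deltaSum_edge hs hVn (hVf j hj),
    Delta.commute_deltaSum_star_edge hs hVn (hVf j hj)⟩, ?_⟩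
  rw [Delta.adjoin_range_eq hs (f := fun z => α z.val)
    fun z => hα1 z.val (by have := ZMod.val_lt z; omega)]
end

section
/- Let (E,w) be a singly connected weighted Bratteli diagram. For each edge e ∈ E^1 write l_e := w(s(e))/w(r(e)) ∈ ℕ. For n ≥ 1 define group homomorphisms A'_n, B_n : ⊕_{v ∈ E_n^0} ℤ² → ⊕_{u ∈ E_{n+1}^0} ℤ² on generators by A'_n((p,q)δ_v) = Σ_{e ∈ vE^1} (l_e p, q) δ_{s(e)} and B_n((p,q)δ_v) = Σ_{e ∈ vE^1} (p + (1 − l_e) q, l_e q) δ_{s(e)}, where gδ_v denotes the element of the direct sum supported at v with value g. Then there is a group isomorphism from the direct limit of the sequence (⊕_{v ∈ E_n^0} ℤ², B_n) onto the direct limit of the sequence (⊕_{v ∈ E_n^0} ℤ², A'_n) which, for every n, v ∈ E_n^0 and (a,b) ∈ ℤ², carries the image in the direct limit of (a,b)δ_v at stage n to the image in the direct limit of (b, a+b)δ_v at stage n. -/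
open scoped BigOperators NNReal ENNReal

/-- A Bratteli diagram: a directed graph whose vertices are partitioned into finite
nonempty levels (level `n` here corresponds to `E_{n+1}^0` in the paper), each edge
pointing from a vertex at level `n+1` (its source) to one at level `n` (its range),
such that every vertex receives an edge and every vertex not at level `0` emits one. -/
structure BratteliDiagram where
  V : Type
  Edge : Type
  esrc : Edge → V
  erng : Edge → V
  level : V → ℕ
  level_src : ∀ e, level (esrc e) = level (erng e) + 1
  level_finite : ∀ n, {v | level v = n}.Finite
  level_nonempty : ∀ n, ∃ v, level v = n
  rcv : ∀ v, ∃ e, erng e = v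
  emit : ∀ v, level v ≠ 0 → ∃ e, esrc e = v

namespace BratteliDiagram

/-- A Bratteli diagram is singly connected if there is at most one edge between any
two vertices. -/
def SinglyConnected (E : BratteliDiagram) : Prop :=
  ∀ e f : E.Edge, E.erng e = E.erng f → E.esrc e = E.esrc f → e = f

/-- A graph trace on a Bratteli diagram. -/
def IsTrace (E : BratteliDiagram) (h : E.V → ℝ≥0) : Prop :=
  ∀ v, h v = ∑ᶠ e ∈ {e | E.erng e = v}, h (E.esrc e)

/-- `HasPath E n v u`: there is a path of length `n` in `E` with range `v` and
source `u`. -/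
def HasPath (E : BratteliDiagram) : ℕ → E.V → E.V → Prop
  | 0, v, u => v = u
  | n + 1, v, u => ∃ e, E.erng e = v ∧ HasPath E n (E.esrc e) u

/-- A Bratteli diagram is cofinal if for all `v, v'` there exists `n` such that the
source of every path of length `n` with range `v'` is connected to `v`. -/
def Cofinal (E : BratteliDiagram) : Prop :=
  ∀ v v' : E.V, ∃ n : ℕ, ∀ u : E.V, E.HasPath n v' u → ∃ m : ℕ, E.HasPath m v u

end BratteliDiagram

open KGraph

/-- The `(k+1)`-graph `Λ_E` associated to a Bratteli diagram `E` of covering maps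
`p_f : Λ_{s(f)} → Λ_{r(f)}` between `k`-graphs `(Λ_v)_{v ∈ E^0}`, together with its
defining data: injective functors `ι_v : Λ_v → Λ_E` and a bijection
`e : ⨆_{v ∉ E_1^0} Λ_v^0 × E^1 v → Λ_E^{e_{k+1}}` satisfying properties (1)–(5). -/
structure BCSLimit {k : ℕ} (E : BratteliDiagram) (Λv : E.V → KGraph k)
    (pe : ∀ f : E.Edge, (Λv (E.esrc f)).M → (Λv (E.erng f)).M) where
  Lam : KGraph (k + 1)
  ι : ∀ v, (Λv v).M → Lam.M
  ι_inj : ∀ v, Function.Injective (ι v)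
  ι_src : ∀ v x, Lam.src (ι v x) = ι v ((Λv v).src x)
  ι_rng : ∀ v x, Lam.rng (ι v x) = ι v ((Λv v).rng x)
  ι_comp : ∀ v x y, (Λv v).Composable x y →
    Lam.comp (ι v x) (ι v y) = ι v ((Λv v).comp x y)
  ι_deg : ∀ v x, Lam.deg (ι v x) = Fin.snoc ((Λv v).deg x) 0
  ι_disjoint : ∀ v u x y, ι v x = ι u y → v = u
  ι_union : ∀ z : Lam.M, Lam.deg z (Fin.last k) = 0 → ∃ v x, ι v x = z
  edge : (Σ f : E.Edge, (Λv (E.esrc f)).M) → Lam.M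
  edge_deg : ∀ q : Σ f : E.Edge, (Λv (E.esrc f)).M, (Λv (E.esrc q.1)).IsVertex q.2 →
    Lam.deg (edge q) = Fin.snoc (fun _ : Fin k => 0) 1
  edge_injOn : Set.InjOn edge {q | (Λv (E.esrc q.1)).IsVertex q.2}
  edge_surj : ∀ z : Lam.M, Lam.deg z = Fin.snoc (fun _ : Fin k => 0) 1 →
    ∃ q, (Λv (E.esrc q.1)).IsVertex q.2 ∧ edge q = z
  edge_src : ∀ (f : E.Edge) (x : (Λv (E.esrc f)).M), (Λv (E.esrc f)).IsVertex x →
    Lam.src (edge ⟨f, x⟩) = ι (E.esrc f) x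
  edge_rng : ∀ (f : E.Edge) (x : (Λv (E.esrc f)).M), (Λv (E.esrc f)).IsVertex x →
    Lam.rng (edge ⟨f, x⟩) = ι (E.erng f) (pe f x)
  edge_comm : ∀ (f : E.Edge) (x : (Λv (E.esrc f)).M),
    Lam.comp (edge ⟨f, (Λv (E.esrc f)).rng x⟩) (ι (E.esrc f) x) =
      Lam.comp (ι (E.erng f) (pe f x)) (edge ⟨f, (Λv (E.esrc f)).src x⟩)
open scoped DirectSum

attribute [local instance] Classical.propDecidable

/-- The transition homomorphisms `G i →+ G j` (for `i ≤ j`) generated by a sequence of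
homomorphisms `G n →+ G (n+1)`. -/
noncomputable def natTransMaps {G : ℕ → Type*} [∀ n, AddCommGroup (G n)]
    (f : ∀ n, G n →+ G (n + 1)) : ∀ i j : ℕ, i ≤ j → (G i →+ G j) :=
  fun i _ h => Nat.leRecOn h (fun {m} g => (f m).comp g) (AddMonoidHom.id (G i))

/-- For `u` a vertex at level `n+1` of a Bratteli diagram and `e` an edge emitted
by `u`, the range of `e` as a vertex at level `n`. -/
def BratteliDiagram.rngV (E : BratteliDiagram) {n : ℕ}
    (u : {v : E.V // E.level v = n + 1}) (e : {e : E.Edge // E.esrc e = u.1}) :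
    {v : E.V // E.level v = n} :=
  ⟨E.erng e.1, by
    have h := E.level_src e.1
    rw [e.2, u.2] at h
    omega⟩

/-! The shear `σ(a, b) = (b, a + b)` of `ℤ²` turns each summand of `B_n` into the corresponding
summand of `A'_n`: `σ(p + (1 - l) q, l q) = (l q, p + q) = (l · (σ(p, q)).1, (σ(p, q)).2)`.
Applied in every coordinate, `σ` is therefore an isomorphism of direct systems, so it induces
an isomorphism of the direct limits. -/

section NatTransMaps

variable {G H : ℕ → Type*} [∀ n, AddCommGroup (G n)] [∀ n, AddCommGroup (H n)]

theorem natTransMaps_self (f : ∀ n, G n →+ G (n + 1)) (i : ℕ) :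
    natTransMaps f i i le_rfl = AddMonoidHom.id (G i) :=
  Nat.leRecOn_self _

theorem natTransMaps_succ (f : ∀ n, G n →+ G (n + 1)) {i j : ℕ} (h : i ≤ j) :
    natTransMaps f i (j + 1) (h.trans j.le_succ) = (f j).comp (natTransMaps f i j h) :=
  Nat.leRecOn_succ h _

theorem natTransMaps_comp_comm {f : ∀ n, G n →+ G (n + 1)} {g : ∀ n, H n →+ H (n + 1)}
    (e : ∀ n, G n →+ H n) (he : ∀ n, (e (n + 1)).comp (f n) = (g n).comp (e n))
    (i j : ℕ) (h : i ≤ j) :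
    (e j).comp (natTransMaps f i j h) = (natTransMaps g i j h).comp (e i) := by
  induction j, h using Nat.le_induction with
  | base => simp only [natTransMaps_self, AddMonoidHom.comp_id, AddMonoidHom.id_comp]
  | succ j hij ih =>
    rw [natTransMaps_succ f hij, natTransMaps_succ g hij, ← AddMonoidHom.comp_assoc, he,
      AddMonoidHom.comp_assoc, ih, AddMonoidHom.comp_assoc]

noncomputable def natDirectLimitCongr {f : ∀ n, G n →+ G (n + 1)} {g : ∀ n, H n →+ H (n + 1)}
    (e : ∀ n, G n ≃+ H n)
    (he : ∀ n, (e (n + 1)).toAddMonoidHom.comp (f n) = (g n).comp (e n).toAddMonoidHom) :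
    AddCommGroup.DirectLimit G (natTransMaps f) ≃+ AddCommGroup.DirectLimit H (natTransMaps g) :=
  AddCommGroup.DirectLimit.congr e (natTransMaps_comp_comm (fun n => (e n).toAddMonoidHom) he)

theorem natDirectLimitCongr_of {f : ∀ n, G n →+ G (n + 1)} {g : ∀ n, H n →+ H (n + 1)}
    (e : ∀ n, G n ≃+ H n)
    (he : ∀ n, (e (n + 1)).toAddMonoidHom.comp (f n) = (g n).comp (e n).toAddMonoidHom)
    (n : ℕ) (x : G n) :
    natDirectLimitCongr e he (AddCommGroup.DirectLimit.of G (natTransMaps f) n x) =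
      AddCommGroup.DirectLimit.of H (natTransMaps g) n (e n x) :=
  AddCommGroup.DirectLimit.congr_apply_of _ _ x

end NatTransMaps

section Shear

variable (G : Type*) [AddCommGroup G]

def prodShear : (G × G) ≃+ (G × G) where
  toFun p := (p.2, p.1 + p.2)
  invFun p := (p.2 - p.1, p.1)
  left_inv p := by simp
  right_inv p := by simp
  map_add' p q := by simp only [Prod.fst_add, Prod.snd_add, Prod.mk_add_mk]; abel_nf

@[simp] theorem prodShear_apply (p : G × G) : prodShear G p = (p.2, p.1 + p.2) := rfl

theorem prodShear_mk_sub_mul {R : Type*} [CommRing R] (l p q : R) :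
    prodShear R (p + (1 - l) * q, l * q) =
      (l * (prodShear R (p, q)).1, (prodShear R (p, q)).2) := by
  simp only [prodShear_apply, Prod.mk.injEq, true_and]
  ring

variable (ι : Type*)

noncomputable def directSumShear : (⨁ _ : ι, G × G) ≃+ (⨁ _ : ι, G × G) :=
  DFinsupp.mapRange.addEquiv fun _ => prodShear G

variable {G ι}

theorem directSumShear_apply (x : ⨁ _ : ι, G × G) (v : ι) :
    directSumShear G ι x v = prodShear G (x v) :=
  DFinsupp.mapRange_apply _ (fun _ => map_zero _) x v

theorem directSumShear_of [DecidableEq ι] (v : ι) (p : G × G) :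
    directSumShear G ι (DirectSum.of (fun _ => G × G) v p) =
      DirectSum.of (fun _ => G × G) v (prodShear G p) :=
  DFinsupp.mapRange_single (hf := fun _ => map_zero _)

end Shear

theorem BratteliDiagram.directSumShear_comp_eq (E : BratteliDiagram) (w : E.V → ℕ) (n : ℕ)
    (A B : (⨁ _ : {v : E.V // E.level v = n}, ℤ × ℤ) →+
      (⨁ _ : {v : E.V // E.level v = n + 1}, ℤ × ℤ))
    (hA : ∀ (x : ⨁ _ : {v : E.V // E.level v = n}, ℤ × ℤ)
        (u : {v : E.V // E.level v = n + 1}),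
      A x u = ∑ᶠ e : {e : E.Edge // E.esrc e = u.1},
        (((w (E.esrc e.1) / w (E.erng e.1) : ℕ) : ℤ) * (x (E.rngV u e)).1,
          (x (E.rngV u e)).2))
    (hB : ∀ (x : ⨁ _ : {v : E.V // E.level v = n}, ℤ × ℤ)
        (u : {v : E.V // E.level v = n + 1}),
      B x u = ∑ᶠ e : {e : E.Edge // E.esrc e = u.1},
        ((x (E.rngV u e)).1 +
            (1 - ((w (E.esrc e.1) / w (E.erng e.1) : ℕ) : ℤ)) * (x (E.rngV u e)).2,
          ((w (E.esrc e.1) / w (E.erng e.1) : ℕ) : ℤ) * (x (E.rngV u e)).2)) :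
    (directSumShear ℤ _).toAddMonoidHom.comp B = A.comp (directSumShear ℤ _).toAddMonoidHom := by
  refine AddMonoidHom.ext fun x => DFinsupp.ext fun u => ?_
  change directSumShear ℤ _ (B x) u = A (directSumShear ℤ _ x) u
  rw [hA, directSumShear_apply, hB, AddEquiv.map_finsum]
  simp only [directSumShear_apply, prodShear_mk_sub_mul]

open BratteliDiagram in
theorem rank3_K1_iso_K0_general (E : BratteliDiagram)
    (w : E.V → ℕ)
    (A B : ∀ n : ℕ, (⨁ _ : {v : E.V // E.level v = n}, ℤ × ℤ) →+
      (⨁ _ : {v : E.V // E.level v = n + 1}, ℤ × ℤ))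
    (hA : ∀ (n : ℕ) (x : ⨁ _ : {v : E.V // E.level v = n}, ℤ × ℤ)
        (u : {v : E.V // E.level v = n + 1}),
      A n x u = ∑ᶠ e : {e : E.Edge // E.esrc e = u.1},
        (((w (E.esrc e.1) / w (E.erng e.1) : ℕ) : ℤ) * (x (E.rngV u e)).1,
          (x (E.rngV u e)).2))
    (hB : ∀ (n : ℕ) (x : ⨁ _ : {v : E.V // E.level v = n}, ℤ × ℤ)
        (u : {v : E.V // E.level v = n + 1}),
      B n x u = ∑ᶠ e : {e : E.Edge // E.esrc e = u.1},
        ((x (E.rngV u e)).1 +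
            (1 - ((w (E.esrc e.1) / w (E.erng e.1) : ℕ) : ℤ)) * (x (E.rngV u e)).2,
          ((w (E.esrc e.1) / w (E.erng e.1) : ℕ) : ℤ) * (x (E.rngV u e)).2)) :
    ∃ φ : AddCommGroup.DirectLimit (fun n => ⨁ _ : {v : E.V // E.level v = n}, ℤ × ℤ)
          (natTransMaps B) ≃+
        AddCommGroup.DirectLimit (fun n => ⨁ _ : {v : E.V // E.level v = n}, ℤ × ℤ)
          (natTransMaps A),
      ∀ (n : ℕ) (v : {v : E.V // E.level v = n}) (a b : ℤ),
        φ (AddCommGroup.DirectLimit.of _ (natTransMaps B) n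
            (DirectSum.of (fun _ => ℤ × ℤ) v (a, b))) =
          AddCommGroup.DirectLimit.of _ (natTransMaps A) n
            (DirectSum.of (fun _ => ℤ × ℤ) v (b, a + b)) := by
  refine ⟨natDirectLimitCongr (fun n => directSumShear ℤ _)
    fun n => E.directSumShear_comp_eq w n (A n) (B n) (hA n) (hB n), fun n v a b => ?_⟩
  rw [natDirectLimitCongr_of, directSumShear_of, prodShear_apply]

open BratteliDiagram in
/-- For a singly connected weighted Bratteli diagram `(E, w)`, with
`l_e := w(s(e))/w(r(e))`, the direct limit of `(⊕_{v ∈ E_n^0} ℤ², B_n)` is isomorphic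
to the direct limit of `(⊕_{v ∈ E_n^0} ℤ², A'_n)` via an isomorphism carrying the
class of `(a,b)δ_v` at stage `n` to the class of `(b, a+b)δ_v` at stage `n`, where
`A'_n((p,q)δ_v) = Σ_{e ∈ vE¹} (l_e p, q) δ_{s(e)}` and
`B_n((p,q)δ_v) = Σ_{e ∈ vE¹} (p + (1−l_e) q, l_e q) δ_{s(e)}`. -/
theorem rank3_K1_iso_K0 (E : BratteliDiagram) (hsc : E.SinglyConnected)
    (w : E.V → ℕ) (hw : ∀ v, 0 < w v)
    (hdvd : ∀ f : E.Edge, w (E.erng f) ∣ w (E.esrc f))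
    (A B : ∀ n : ℕ, (⨁ _ : {v : E.V // E.level v = n}, ℤ × ℤ) →+
      (⨁ _ : {v : E.V // E.level v = n + 1}, ℤ × ℤ))
    (hA : ∀ (n : ℕ) (x : ⨁ _ : {v : E.V // E.level v = n}, ℤ × ℤ)
        (u : {v : E.V // E.level v = n + 1}),
      A n x u = ∑ᶠ e : {e : E.Edge // E.esrc e = u.1},
        (((w (E.esrc e.1) / w (E.erng e.1) : ℕ) : ℤ) * (x (E.rngV u e)).1,
          (x (E.rngV u e)).2))
    (hB : ∀ (n : ℕ) (x : ⨁ _ : {v : E.V // E.level v = n}, ℤ × ℤ)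
        (u : {v : E.V // E.level v = n + 1}),
      B n x u = ∑ᶠ e : {e : E.Edge // E.esrc e = u.1},
        ((x (E.rngV u e)).1 +
            (1 - ((w (E.esrc e.1) / w (E.erng e.1) : ℕ) : ℤ)) * (x (E.rngV u e)).2,
          ((w (E.esrc e.1) / w (E.erng e.1) : ℕ) : ℤ) * (x (E.rngV u e)).2)) :
    ∃ φ : AddCommGroup.DirectLimit (fun n => ⨁ _ : {v : E.V // E.level v = n}, ℤ × ℤ)
          (natTransMaps B) ≃+
        AddCommGroup.DirectLimit (fun n => ⨁ _ : {v : E.V // E.level v = n}, ℤ × ℤ)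
          (natTransMaps A),
      ∀ (n : ℕ) (v : {v : E.V // E.level v = n}) (a b : ℤ),
        φ (AddCommGroup.DirectLimit.of _ (natTransMaps B) n
            (DirectSum.of (fun _ => ℤ × ℤ) v (a, b))) =
          AddCommGroup.DirectLimit.of _ (natTransMaps A) n
            (DirectSum.of (fun _ => ℤ × ℤ) v (b, a + b)) :=
  rank3_K1_iso_K0_general E w A B hA hB
end
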